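/- arXiv:1812.07957 — 3 statements merged into one kernel-verified Lean document; each statement's English description precedes it below -/
import Mathlib

section
/- Let α ∈ (0,1) and ρ > 1. Then for every complex number z with |z| = ρ, (1 - ρ^{-1})^α ≤ |(1 - z^{-1})^α|, where (1 - w)^α := ∑_{k=0}^∞ C(α,k)(-w)^k for |w| < 1. -/
/-- The generalized binomial coefficient `C(α, n) = α(α-1)⋯(α-n+1)/n!`. -/
noncomputable def gbc (α : ℂ) (n : ℕ) : ℂ :=
  (descPochhammer ℂ n).eval α / n.factorial

noncomputable def bb (γ : ℝ) (k : ℕ) : ℝ :=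
  (-1)^k * (descPochhammer ℝ k).eval γ / k.factorial

noncomputable def Qp (γ : ℝ) (n : ℕ) (x : ℝ) : ℝ :=
  ∑ k ∈ Finset.range (n+1), bb γ k * x ^ k

lemma bb_zero (γ : ℝ) : bb γ 0 = 1 := by simp [bb]

lemma bb_rec (γ : ℝ) (k : ℕ) : ((k:ℝ)+1) * bb γ (k+1) = -γ * bb (γ-1) k := by
  have h : (descPochhammer ℝ (k+1)).eval γ = γ * (descPochhammer ℝ k).eval (γ - 1) := by
    rw [descPochhammer_succ_left]
    simp [Polynomial.eval_comp]
  have hk : ((k:ℝ)+1) ≠ 0 := by positivity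
  simp only [bb, h, Nat.factorial_succ, pow_succ, Nat.cast_mul, Nat.cast_add, Nat.cast_one]
  field_simp

lemma bb_eq (γ : ℝ) (k : ℕ) : bb γ (k+1) = -γ * bb (γ-1) k / ((k:ℝ)+1) := by
  have hk : ((k:ℝ)+1) ≠ 0 := by positivity
  field_simp [← bb_rec γ k]
  linear_combination bb_rec γ k

lemma bb_nonneg : ∀ (k : ℕ) (γ : ℝ), γ ≤ 0 → 0 ≤ bb γ k := by
  intro k
  induction k with
  | zero => intro γ _; simp [bb_zero]
  | succ k ih =>
    intro γ hγ
    rw [bb_eq]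
    have h1 : 0 ≤ -γ := by linarith
    have h2 : 0 ≤ bb (γ-1) k := ih _ (by linarith)
    positivity

lemma Qp_zero (γ : ℝ) (n : ℕ) : Qp γ n 0 = 1 := by
  unfold Qp
  rw [Finset.sum_eq_single 0]
  · simp [bb_zero]
  · intro b _ hb; simp [zero_pow hb]
  · simp

lemma hasDerivAt_Qp (γ : ℝ) (n : ℕ) (x : ℝ) :
    HasDerivAt (fun t => Qp γ (n+1) t) (-γ * Qp (γ-1) n x) x := by
  have h : HasDerivAt (fun t => Qp γ (n+1) t)
      (∑ k ∈ Finset.range (n+2), bb γ k * ((k:ℝ) * x ^ (k-1))) x := by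
    apply HasDerivAt.fun_sum
    intro k _
    exact (hasDerivAt_pow k x).const_mul (bb γ k)
  convert h using 1
  rw [Finset.sum_range_succ']
  simp only [Nat.cast_zero, zero_mul, mul_zero, add_zero]
  unfold Qp
  rw [Finset.mul_sum]
  apply Finset.sum_congr rfl
  intro k _
  have := bb_rec γ k
  push_cast
  linear_combination (-(x ^ k)) * this

lemma aux_mono {F F' : ℝ → ℝ} (h : ∀ t ∈ Set.Ico (0:ℝ) 1, HasDerivAt F (F' t) t)
    (h' : ∀ t ∈ Set.Ico (0:ℝ) 1, 0 ≤ F' t) {x : ℝ} (hx : x ∈ Set.Ico (0:ℝ) 1) :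
    F 0 ≤ F x := by
  have hmono : MonotoneOn F (Set.Ico (0:ℝ) 1) := by
    apply monotoneOn_of_deriv_nonneg (convex_Ico 0 1)
    · intro t ht; exact (h t ht).continuousAt.continuousWithinAt
    · intro t ht
      rw [interior_Ico] at ht
      exact (h t ⟨le_of_lt ht.1, ht.2⟩).differentiableAt.differentiableWithinAt
    · intro t ht
      rw [interior_Ico] at ht
      have ht' : t ∈ Set.Ico (0:ℝ) 1 := ⟨le_of_lt ht.1, ht.2⟩
      rw [(h t ht').deriv]
      exact h' t ht'
  exact hmono ⟨le_rfl, one_pos⟩ hx hx.1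

lemma hasDerivAt_rpow1 (γ : ℝ) {x : ℝ} (hx : x < 1) :
    HasDerivAt (fun t => (1-t) ^ γ : ℝ → ℝ) (-γ * (1-x) ^ (γ-1)) x := by
  have h1 : HasDerivAt (fun t : ℝ => 1 - t) (-1) x := by
    simpa using (hasDerivAt_id x).const_sub 1
  have h2 : HasDerivAt (fun y : ℝ => y ^ γ) (γ * (1-x) ^ (γ-1)) (1-x) :=
    Real.hasDerivAt_rpow_const (Or.inl (by linarith))
  have := h2.comp x h1
  refine this.congr_deriv ?_
  ring

lemma neg_case : ∀ (m : ℕ) (γ : ℝ), γ ≤ 0 → ∀ x ∈ Set.Ico (0:ℝ) 1, Qp γ m x ≤ (1-x) ^ γ := by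
  intro m
  induction m with
  | zero =>
    intro γ hγ x hx
    have : Qp γ 0 x = 1 := by simp [Qp, bb_zero]
    rw [this]
    exact Real.one_le_rpow_of_pos_of_le_one_of_nonpos (by linarith [hx.2]) (by linarith [hx.1]) hγ
  | succ m ih =>
    intro γ hγ x hx
    have key : (fun t => (1-t) ^ γ - Qp γ (m+1) t) 0 ≤ (fun t => (1-t) ^ γ - Qp γ (m+1) t) x := by
      apply aux_mono (F := fun t => (1-t) ^ γ - Qp γ (m+1) t) (F' := fun t => -γ * ((1-t) ^ (γ-1) - Qp (γ-1) m t))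
      · intro t ht
        have := (hasDerivAt_rpow1 γ ht.2).sub (hasDerivAt_Qp γ m t)
        refine this.congr_deriv ?_
        ring
      · intro t ht
        have h1 : Qp (γ-1) m t ≤ (1-t) ^ (γ-1) := ih (γ-1) (by linarith) t ht
        have h2 : (0:ℝ) ≤ -γ := by linarith
        have := sub_nonneg.mpr h1
        positivity
      · exact hx
    simp only [sub_zero, Real.one_rpow, Qp_zero] at key
    linarith

lemma pos_case (n : ℕ) (α : ℝ) (hα : α ∈ Set.Ioo (0:ℝ) 1) :
    ∀ x ∈ Set.Ico (0:ℝ) 1, (1-x) ^ α ≤ Qp α n x := by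
  obtain ⟨hα0, hα1⟩ := hα
  cases n with
  | zero =>
    intro x hx
    have : Qp α 0 x = 1 := by simp [Qp, bb_zero]
    rw [this]
    exact Real.rpow_le_one (by linarith [hx.2]) (by linarith [hx.1]) (le_of_lt hα0)
  | succ m =>
    intro x hx
    have key : (fun t => Qp α (m+1) t - (1-t) ^ α) 0 ≤ (fun t => Qp α (m+1) t - (1-t) ^ α) x := by
      apply aux_mono (F := fun t => Qp α (m+1) t - (1-t) ^ α) (F' := fun t => α * ((1-t) ^ (α-1) - Qp (α-1) m t))
      · intro t ht
        have := (hasDerivAt_Qp α m t).sub (hasDerivAt_rpow1 α ht.2)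
        refine this.congr_deriv ?_
        ring
      · intro t ht
        have h1 : Qp (α-1) m t ≤ (1-t) ^ (α-1) := neg_case m (α-1) (by linarith) t ht
        have := sub_nonneg.mpr h1
        positivity
      · exact hx
    simp only [sub_zero, Real.one_rpow, Qp_zero] at key
    linarith

lemma desc_eval_real (k : ℕ) (α : ℝ) :
    (descPochhammer ℂ k).eval (α:ℂ) = Complex.ofReal ((descPochhammer ℝ k).eval α) := by
  rw [← descPochhammer_map (algebraMap ℝ ℂ) k, Polynomial.eval_map, ← Complex.coe_algebraMap,
    Polynomial.eval₂_at_apply]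

lemma gbc_bridge (α : ℝ) (k : ℕ) : (-1:ℂ)^k * gbc (α:ℂ) k = ((bb α k : ℝ) : ℂ) := by
  rw [gbc, desc_eval_real, bb]
  push_cast
  ring

/-- For `|z| = ρ > 1` and `α ∈ (0,1)`: `(1 - ρ⁻¹)^α ≤ |(1 - z⁻¹)^α|`, where
`(1 - z⁻¹)^α` is given by the binomial series `∑ (-1)^k C(α,k) z⁻ᵏ`. -/
theorem binom_estimate_on_circle (α : ℝ) (hα : α ∈ Set.Ioo (0:ℝ) 1)
    (ρ : ℝ) (hρ : 1 < ρ) (z : ℂ) (hz : ‖z‖ = ρ) :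
    (1 - ρ⁻¹) ^ α ≤ ‖∑' k : ℕ, (-1 : ℂ) ^ k * gbc (α : ℂ) k * z⁻¹ ^ k‖ := by

  obtain ⟨hα0, hα1⟩ := hα
  set x : ℝ := ρ⁻¹ with hxdef
  have hx0 : 0 < x := by positivity
  have hx1 : x < 1 := inv_lt_one_of_one_lt₀ hρ
  have hxm : x ∈ Set.Ico (0:ℝ) 1 := ⟨le_of_lt hx0, hx1⟩
  have hzabs : ‖z⁻¹‖ = x := by rw [norm_inv, hz]
  -- rewrite terms
  have hterm : ∀ k, (-1 : ℂ) ^ k * gbc (α : ℂ) k * z⁻¹ ^ k = ((bb α k : ℝ) : ℂ) * z⁻¹ ^ k := by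
    intro k; rw [gbc_bridge]
  have hnorm : ∀ k, ‖((bb α k : ℝ) : ℂ) * z⁻¹ ^ k‖ = |bb α k| * x ^ k := by
    intro k
    rw [norm_mul, norm_pow, hzabs, Complex.norm_real, Real.norm_eq_abs]
  -- sign of tail coefficients
  have hbbneg : ∀ k, bb α (k+1) ≤ 0 := by
    intro k
    rw [bb_eq]
    have h1 : 0 ≤ bb (α-1) k := bb_nonneg k (α-1) (by linarith)
    have hk : (0:ℝ) < (k:ℝ)+1 := by positivity
    apply div_nonpos_of_nonpos_of_nonneg _ (le_of_lt hk)
    nlinarith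
  -- tail real series
  set v : ℕ → ℝ := fun k => -(bb α (k+1)) * x ^ (k+1) with hvdef
  have hv0 : ∀ k, 0 ≤ v k := by
    intro k
    have := hbbneg k
    have : 0 ≤ -(bb α (k+1)) := by linarith
    positivity
  have hvsum : ∀ n, ∑ k ∈ Finset.range n, v k = 1 - Qp α n x := by
    intro n
    have := Finset.sum_range_succ' (fun k => bb α k * x ^ k) n
    unfold Qp
    rw [this]
    simp only [hvdef, bb_zero, pow_zero, mul_one, neg_mul]
    rw [Finset.sum_neg_distrib]
    ring
  have hQpos : ∀ n, (1-x) ^ α ≤ Qp α n x := fun n => pos_case n α ⟨hα0, hα1⟩ x hxm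
  have hrpow_pos : (0:ℝ) < (1-x) ^ α := Real.rpow_pos_of_pos (by linarith) α
  have hvle : ∀ n, ∑ k ∈ Finset.range n, v k ≤ 1 - (1-x) ^ α := by
    intro n
    rw [hvsum n]
    linarith [hQpos n]
  have hvsummable : Summable v := summable_of_sum_range_le hv0 hvle
  have hvtsum : ∑' k, v k ≤ 1 - (1-x) ^ α := Summable.tsum_le_of_sum_range_le hvsummable hvle
  -- complex tail summable
  have htail : Summable (fun k => ((bb α (k+1) : ℝ) : ℂ) * z⁻¹ ^ (k+1)) := by
    apply Summable.of_norm
    have : (fun k => ‖((bb α (k+1) : ℝ) : ℂ) * z⁻¹ ^ (k+1)‖) = v := by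
      funext k
      rw [hvdef]
      show ‖_‖ = _
      rw [hnorm (k+1), abs_of_nonpos (hbbneg k)]
    rw [this]
    exact hvsummable
  have hsummable : Summable (fun k => ((bb α k : ℝ) : ℂ) * z⁻¹ ^ k) :=
    (summable_nat_add_iff 1).mp htail
  -- split off k = 0
  have hsplit : ∑' k : ℕ, ((bb α k : ℝ) : ℂ) * z⁻¹ ^ k
      = 1 + ∑' k : ℕ, ((bb α (k+1) : ℝ) : ℂ) * z⁻¹ ^ (k+1) := by
    rw [Summable.tsum_eq_zero_add hsummable]
    simp [bb_zero]
  set T : ℂ := ∑' k : ℕ, ((bb α (k+1) : ℝ) : ℂ) * z⁻¹ ^ (k+1) with hTdef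
  have hTbound : ‖T‖ ≤ 1 - (1-x) ^ α := by
    calc ‖T‖ ≤ ∑' k, ‖((bb α (k+1) : ℝ) : ℂ) * z⁻¹ ^ (k+1)‖ :=
          norm_tsum_le_tsum_norm htail.norm
      _ = ∑' k, v k := by
          congr 1
          funext k
          show ‖_‖ = _
          rw [hnorm (k+1), abs_of_nonpos (hbbneg k), hvdef]
      _ ≤ 1 - (1-x) ^ α := hvtsum
  have h1T : 1 - ‖T‖ ≤ ‖1 + T‖ := by
    have h := norm_add_le (1 + T) (-T)
    simp only [add_neg_cancel_right, norm_one, norm_neg] at h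
    linarith
  have hfinal : (1-x) ^ α ≤ ‖1 + T‖ := by
    calc (1-x) ^ α = 1 - (1 - (1-x) ^ α) := by ring
      _ ≤ 1 - ‖T‖ := by linarith [hTbound]
      _ ≤ ‖1 + T‖ := h1T
  have : (∑' k : ℕ, (-1 : ℂ) ^ k * gbc (α : ℂ) k * z⁻¹ ^ k)
      = ∑' k : ℕ, ((bb α k : ℝ) : ℂ) * z⁻¹ ^ k := by
    congr 1; funext k; exact hterm k
  rw [this, hsplit]
  exact hfinal
end

section
/- Let ρ > 1, α, β ∈ ℂ, and H a complex Hilbert space. The operators (1 - τ^{-1})^α on ℓ_{2,ρ}(ℤ; H), defined by convolution with the sequence c^α where c^α_k = (-1)^k C(α,k) for k ≥ 0 and 0 otherwise, satisfy (1-τ^{-1})^α (1-τ^{-1})^β = (1-τ^{-1})^{α+β}. In particular, (1-τ^{-1})^α is invertible with inverse (1-τ^{-1})^{-α}. -/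
/-- The operator `(1 - τ⁻¹)^α` on sequences: convolution with the kernel
`c^α_k = (-1)^k C(α,k)` for `k ≥ 0` (and `0` for `k < 0`). -/
noncomputable def fracPow (H : Type*) [NormedAddCommGroup H] [Module ℂ H]
    (α : ℂ) (u : ℤ → H) : ℤ → H :=
  fun n => ∑' k : ℕ, ((-1 : ℂ) ^ k * gbc α k) • u (n - k)

lemma gbc_eq_choose (α : ℂ) (n : ℕ) : gbc α n = Ring.choose α n := by
  have h := Ring.descPochhammer_eq_factorial_smul_choose α n
  have h2 : (descPochhammer ℤ n).smeval α = (descPochhammer ℂ n).eval α := by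
    rw [← Polynomial.aeval_eq_smeval, Polynomial.aeval_def, ← Polynomial.eval_map,
      descPochhammer_map]
  rw [h2] at h
  have hn : (n.factorial : ℂ) ≠ 0 := by exact_mod_cast n.factorial_ne_zero
  rw [gbc, h, nsmul_eq_mul, mul_comm, mul_div_assoc, div_self hn, mul_one]

lemma gbc_vandermonde (α β : ℂ) (k : ℕ) :
    gbc (α + β) k = ∑ ij ∈ Finset.HasAntidiagonal.antidiagonal k, gbc α ij.1 * gbc β ij.2 := by
  simp only [gbc_eq_choose]
  exact Ring.add_choose_eq k (Commute.all α β)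

lemma gbc_succ (α : ℂ) (k : ℕ) : gbc α (k + 1) = gbc α k * ((α - k) / (k + 1)) := by
  rw [gbc, gbc, descPochhammer_succ_right, Polynomial.eval_mul, Polynomial.eval_sub,
    Polynomial.eval_X, Polynomial.eval_natCast, Nat.factorial_succ, Nat.cast_mul]
  push_cast
  rw [div_mul_div_comm, mul_comm ((k : ℂ) + 1) _]

noncomputable def bseq (c : ℝ) (k : ℕ) : ℝ := ∏ i ∈ Finset.range k, ((c + i) / (i + 1))

lemma bseq_pos {c : ℝ} (hc : 0 < c) (k : ℕ) : 0 < bseq c k := by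
  refine Finset.prod_pos fun i _ => div_pos (by positivity) (by positivity)

lemma gbc_le_bseq (α : ℂ) (k : ℕ) : ‖gbc α k‖ ≤ bseq (‖α‖ + 1) k := by
  induction k with
  | zero => simp [gbc, bseq, descPochhammer]
  | succ k ih =>
    rw [gbc_succ, bseq, Finset.prod_range_succ, ← bseq]
    have hnorm : ‖((k : ℂ) + 1)‖ = (k : ℝ) + 1 := by
      have : ((k : ℂ) + 1) = ((k + 1 : ℕ) : ℂ) := by push_cast; ring
      rw [this, Complex.norm_natCast]; push_cast; ring
    have h1 : ‖(α - k) / (k + 1)‖ ≤ (‖α‖ + 1 + k) / (k + 1) := by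
      rw [norm_div, hnorm]
      gcongr
      calc ‖α - (k : ℂ)‖ ≤ ‖α‖ + ‖(k : ℂ)‖ := norm_sub_le _ _
        _ = ‖α‖ + k := by rw [Complex.norm_natCast]
        _ ≤ ‖α‖ + 1 + k := by linarith
    calc ‖gbc α k * ((α - k) / (k + 1))‖ = ‖gbc α k‖ * ‖(α - k) / (k + 1)‖ := norm_mul _ _
    _ ≤ bseq (‖α‖ + 1) k * ((‖α‖ + 1 + k) / (k + 1)) := by
        apply mul_le_mul ih h1 (norm_nonneg _) (le_of_lt (bseq_pos (by positivity) k))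

lemma summable_bseq {c : ℝ} (hc : 0 < c) {s : ℝ} (hs0 : 0 < s) (hs1 : s < 1) :
    Summable fun k => bseq c k * s ^ k := by
  apply summable_of_ratio_test_tendsto_lt_one hs1
  · filter_upwards with k
    exact ne_of_gt (mul_pos (bseq_pos hc k) (pow_pos hs0 k))
  · have key : ∀ k : ℕ, ‖bseq c (k+1) * s ^ (k+1)‖ / ‖bseq c k * s ^ k‖
        = ((c + k) / (k + 1)) * s := by
      intro k
      rw [Real.norm_of_nonneg (le_of_lt (mul_pos (bseq_pos hc _) (pow_pos hs0 _))),
        Real.norm_of_nonneg (le_of_lt (mul_pos (bseq_pos hc _) (pow_pos hs0 _))),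
        bseq, Finset.prod_range_succ, ← bseq, pow_succ]
      have h1 := ne_of_gt (bseq_pos hc k)
      have h2 := ne_of_gt (pow_pos hs0 k)
      field_simp
    simp only [key]
    have h1 : Filter.Tendsto (fun k : ℕ => (c + k) / (k + 1)) Filter.atTop (nhds 1) := by
      have h2 : Filter.Tendsto (fun k : ℕ => ((k : ℝ) + 1)) Filter.atTop Filter.atTop :=
        Filter.tendsto_atTop_add_const_right _ 1 tendsto_natCast_atTop_atTop
      have h3 : Filter.Tendsto (fun k : ℕ => (c - 1) / ((k : ℝ) + 1) + 1) Filter.atTop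
          (nhds (0 + 1)) := (Filter.Tendsto.div_atTop tendsto_const_nhds h2).add tendsto_const_nhds
      simpa using h3.congr (fun k => by field_simp; ring)
    simpa using (h1.mul tendsto_const_nhds : Filter.Tendsto _ _ (nhds (1 * s)))

lemma summable_gbc (α : ℂ) {s : ℝ} (hs0 : 0 < s) (hs1 : s < 1) :
    Summable fun k : ℕ => ‖gbc α k‖ * s ^ k :=
  Summable.of_nonneg_of_le (fun k => by positivity)
    (fun k => mul_le_mul_of_nonneg_right (gbc_le_bseq α k) (le_of_lt (pow_pos hs0 k)))
    (summable_bseq (by positivity) hs0 hs1)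

lemma fracPow_zero (H : Type*) [NormedAddCommGroup H] [Module ℂ H] (u : ℤ → H) :
    fracPow H 0 u = u := by
  funext n
  rw [fracPow]
  rw [tsum_eq_single 0 ?_]
  · simp [gbc, descPochhammer_eval_zero]
  · intro k hk
    have : gbc 0 k = 0 := by
      rw [gbc, descPochhammer_eval_zero, if_neg hk, zero_div]
    simp [this]

section Main

variable {H : Type*} [NormedAddCommGroup H] [InnerProductSpace ℂ H] [CompleteSpace H]

lemma fracPow_comp (ρ : ℝ) (hρ : 1 < ρ) (α β : ℂ) (u : ℤ → H)
    (hu : Summable fun k : ℤ => ‖u k‖ ^ 2 * ρ ^ (-2 * k)) :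
    fracPow H α (fracPow H β u) = fracPow H (α + β) u := by
  have hρ0 : (0 : ℝ) < ρ := lt_trans one_pos hρ
  set s : ℝ := ρ⁻¹ with hs
  have hs0 : 0 < s := inv_pos.mpr hρ0
  have hs1 : s < 1 := inv_lt_one_of_one_lt₀ hρ
  -- growth bound on u
  set S : ℝ := ∑' k : ℤ, ‖u k‖ ^ 2 * ρ ^ (-2 * k) with hS
  have hS0 : 0 ≤ S := tsum_nonneg fun k => by positivity
  set C : ℝ := Real.sqrt S with hCdef
  have hC0 : 0 ≤ C := Real.sqrt_nonneg S
  have hC : ∀ m : ℤ, ‖u m‖ ≤ C * ρ ^ m := by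
    intro m
    have h1 : ‖u m‖ ^ 2 * ρ ^ (-2 * m) ≤ S :=
      Summable.le_tsum hu m fun j _ => by positivity
    have h2 : ‖u m‖ ^ 2 ≤ S * (ρ ^ m) ^ 2 := by
      have h3 : ρ ^ (-2 * m) = ((ρ ^ m) ^ 2)⁻¹ := by
        rw [← zpow_natCast (ρ ^ m) 2, ← zpow_mul, ← zpow_neg]
        ring_nf
      rw [h3] at h1
      have h4 : (0 : ℝ) < (ρ ^ m) ^ 2 := by positivity
      calc ‖u m‖ ^ 2 = ‖u m‖ ^ 2 * ((ρ ^ m) ^ 2)⁻¹ * (ρ ^ m) ^ 2 := by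
            field_simp
        _ ≤ S * (ρ ^ m) ^ 2 := mul_le_mul_of_nonneg_right h1 (le_of_lt h4)
    calc ‖u m‖ = Real.sqrt (‖u m‖ ^ 2) := (Real.sqrt_sq (norm_nonneg _)).symm
      _ ≤ Real.sqrt (S * (ρ ^ m) ^ 2) := Real.sqrt_le_sqrt h2
      _ = C * ρ ^ m := by
          rw [Real.sqrt_mul hS0, Real.sqrt_sq (le_of_lt (zpow_pos hρ0 m))]
  -- zpow decomposition
  have hzpow : ∀ (m : ℤ) (k : ℕ), ρ ^ (m - (k : ℤ)) = ρ ^ m * s ^ k := by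
    intro m k
    rw [zpow_sub₀ (ne_of_gt hρ0), zpow_natCast, hs, div_eq_mul_inv, inv_pow]
  -- norm bound on the terms
  have hbound : ∀ (γ : ℂ) (m : ℤ) (k : ℕ),
      ‖((-1 : ℂ) ^ k * gbc γ k) • u (m - k)‖ ≤ (C * ρ ^ m) * (‖gbc γ k‖ * s ^ k) := by
    intro γ m k
    rw [norm_smul, norm_mul, norm_pow, norm_neg, norm_one, one_pow, one_mul]
    calc ‖gbc γ k‖ * ‖u (m - k)‖ ≤ ‖gbc γ k‖ * (C * ρ ^ (m - (k : ℤ))) :=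
          mul_le_mul_of_nonneg_left (hC _) (norm_nonneg _)
      _ = (C * ρ ^ m) * (‖gbc γ k‖ * s ^ k) := by rw [hzpow]; ring
  -- inner summability
  have hinner : ∀ (γ : ℂ) (m : ℤ), Summable fun k : ℕ => ((-1 : ℂ) ^ k * gbc γ k) • u (m - k) := by
    intro γ m
    apply Summable.of_norm
    exact Summable.of_nonneg_of_le (fun k => norm_nonneg _) (hbound γ m)
      (((summable_gbc γ hs0 hs1).mul_left _))
  funext n
  -- the double-indexed family
  set F : ℕ × ℕ → H := fun p =>
    (((-1 : ℂ) ^ p.1 * gbc α p.1) * ((-1 : ℂ) ^ p.2 * gbc β p.2)) • u (n - p.1 - p.2) with hF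
  have hFsum : Summable F := by
    apply Summable.of_norm
    refine Summable.of_nonneg_of_le (fun p => norm_nonneg _) ?_
      ((((summable_gbc α hs0 hs1).mul_of_nonneg (summable_gbc β hs0 hs1)
        (fun k => by positivity) (fun k => by positivity)).mul_left (C * ρ ^ n)) :
        Summable fun p : ℕ × ℕ => (C * ρ ^ n) * ((‖gbc α p.1‖ * s ^ p.1) * (‖gbc β p.2‖ * s ^ p.2)))
    rintro ⟨j, i⟩
    simp only [hF, norm_smul, norm_mul, norm_pow, norm_neg, norm_one, one_pow, one_mul]
    calc ‖gbc α j‖ * ‖gbc β i‖ * ‖u (n - j - i)‖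
        ≤ ‖gbc α j‖ * ‖gbc β i‖ * (C * ρ ^ (n - (j : ℤ) - (i : ℤ))) := by
          apply mul_le_mul_of_nonneg_left (hC _) (by positivity)
      _ = (C * ρ ^ n) * ((‖gbc α j‖ * s ^ j) * (‖gbc β i‖ * s ^ i)) := by
          rw [show n - (j : ℤ) - (i : ℤ) = (n - j) - (i : ℤ) by ring, hzpow, hzpow]; ring
  -- main computation
  have step1 : fracPow H α (fracPow H β u) n = ∑' j : ℕ, ∑' i : ℕ, F (j, i) := by
    rw [fracPow]
    congr 1
    funext j
    rw [fracPow]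
    rw [← Summable.tsum_const_smul ((-1 : ℂ) ^ j * gbc α j) (hinner β (n - j))]
    congr 1
    funext i
    rw [smul_smul, hF]
  rw [step1, ← Summable.tsum_prod' hFsum (fun j => hFsum.prod_factor j)]
  -- regroup along antidiagonals
  rw [← Finset.HasAntidiagonal.sigmaAntidiagonalEquivProd.tsum_eq F]
  have hsig := Summable.tsum_sigma'
    (f := fun x : Σ k : ℕ, (Finset.HasAntidiagonal.antidiagonal k : Finset (ℕ × ℕ)) =>
      F (Finset.HasAntidiagonal.sigmaAntidiagonalEquivProd x))
    (fun k => (hasSum_fintype _).summable)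
    (Finset.HasAntidiagonal.sigmaAntidiagonalEquivProd.summable_iff.mpr hFsum)
  rw [hsig]
  rw [fracPow]
  congr 1
  funext k
  have hfin : ∑' (p : (Finset.HasAntidiagonal.antidiagonal k : Finset (ℕ × ℕ))),
      F (Finset.HasAntidiagonal.sigmaAntidiagonalEquivProd ⟨k, p⟩) = ∑ p ∈ Finset.HasAntidiagonal.antidiagonal k, F p := by
    rw [tsum_fintype]
    exact Finset.sum_coe_sort (Finset.HasAntidiagonal.antidiagonal k) F
  rw [hfin]
  have hdiag : ∀ p ∈ Finset.HasAntidiagonal.antidiagonal k, F p =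
      (((-1 : ℂ) ^ p.1 * gbc α p.1) * ((-1 : ℂ) ^ p.2 * gbc β p.2)) • u (n - k) := by
    rintro ⟨j, i⟩ hp
    rw [Finset.HasAntidiagonal.mem_antidiagonal] at hp
    simp only [hF]
    congr 2
    push_cast [← hp]
    ring
  rw [Finset.sum_congr rfl hdiag, ← Finset.sum_smul]
  congr 1
  calc ∑ p ∈ Finset.HasAntidiagonal.antidiagonal k, ((-1 : ℂ) ^ p.1 * gbc α p.1) * ((-1 : ℂ) ^ p.2 * gbc β p.2)
      = ∑ p ∈ Finset.HasAntidiagonal.antidiagonal k, (-1 : ℂ) ^ k * (gbc α p.1 * gbc β p.2) := by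
        apply Finset.sum_congr rfl
        rintro ⟨j, i⟩ hp
        rw [Finset.HasAntidiagonal.mem_antidiagonal] at hp
        rw [← hp, pow_add]
        ring
    _ = (-1 : ℂ) ^ k * gbc (α + β) k := by
        rw [← Finset.mul_sum, gbc_vandermonde]

end Main


/-- On `ℓ_{2,ρ}(ℤ;H)` with `ρ > 1`:
`(1-τ⁻¹)^α (1-τ⁻¹)^β = (1-τ⁻¹)^{α+β}`; in particular `(1-τ⁻¹)^α` is invertible
with inverse `(1-τ⁻¹)^{-α}`. -/
theorem fracPow_add (H : Type*) [NormedAddCommGroup H] [InnerProductSpace ℂ H]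
    [CompleteSpace H] (ρ : ℝ) (hρ : 1 < ρ) (α β : ℂ) (u : ℤ → H)
    (hu : Summable fun k : ℤ => ‖u k‖ ^ 2 * ρ ^ (-2 * k)) :
    fracPow H α (fracPow H β u) = fracPow H (α + β) u ∧
    fracPow H α (fracPow H (-α) u) = u := by
  refine ⟨fracPow_comp ρ hρ α β u hu, ?_⟩
  rw [fracPow_comp ρ hρ α (-α) u hu, add_neg_cancel, fracPow_zero]
end

section
/- Let ρ > 1, α ∈ ℂ, H a complex Hilbert space, and u ∈ ℓ_{2,ρ}(ℤ; H) with support contained in ℕ (u_n = 0 for n < 0). Then (1-τ^{-1})^α u also has support contained in ℕ, and for n ≥ 0, ((1-τ^{-1})^α u)_n = ∑_{k=0}^n (-1)^k C(α,k) u_{n-k}. In particular, (1-τ^{-1})^α is causal. -/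
/-- If `u ∈ ℓ_{2,ρ}(ℤ;H)` has support in `ℕ`, then so does `(1-τ⁻¹)^α u`, and on `ℕ` it is
given by the finite sum `∑_{k=0}^n (-1)^k C(α,k) u_{n-k}`; in particular `(1-τ⁻¹)^α`
is causal. -/
theorem fracPow_causal (H : Type*) [NormedAddCommGroup H] [InnerProductSpace ℂ H]
    [CompleteSpace H] (ρ : ℝ) (hρ : 1 < ρ) (α : ℂ) (u : ℤ → H)
    (hu : Summable fun k : ℤ => ‖u k‖ ^ 2 * ρ ^ (-2 * k))
    (hspt : ∀ n : ℤ, n < 0 → u n = 0) :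
    (∀ n : ℤ, n < 0 → fracPow H α u n = 0) ∧
    (∀ n : ℤ, 0 ≤ n →
      fracPow H α u n
        = ∑ k ∈ Finset.range (n.toNat + 1), ((-1 : ℂ) ^ k * gbc α k) • u (n - k)) ∧
    (∀ a : ℤ, ∀ v : ℤ → H, (Summable fun k : ℤ => ‖v k‖ ^ 2 * ρ ^ (-2 * k)) →
      (∀ m : ℤ, m < a → v m = 0) → ∀ m : ℤ, m < a → fracPow H α v m = 0) := by
  refine ⟨?_, ?_, ?_⟩
  · intro n hn
    have h : ∀ k : ℕ, u (n - k) = 0 := fun k => hspt _ (by omega)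
    simp [fracPow, h]
  · intro n hn
    apply tsum_eq_sum
    intro k hk
    have hk' : n.toNat + 1 ≤ k := by simpa using hk
    rw [hspt _ (by omega), smul_zero]
  · intro a v _ hv m hm
    have h : ∀ k : ℕ, v (m - k) = 0 := fun k => hv _ (by omega)
    simp [fracPow, h]
end
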